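/- arXiv:2602.14657 — 4 statements merged into one kernel-verified Lean document; each statement's English description precedes it below -/
import Mathlib

section
/- For projective space P^n over a field K with homogeneous coordinate ring S = K[x_0,…,x_n], the top Čech cohomology H^n(P^n, O(−n−1)) computed from the Čech complex on the cover by the standard affine opens has dimension 1 over K, with basis the class of 1/(x_0 ⋯ x_n). -/
/-! The Čech complex of `O(d)` on `P^n` with respect to the standard affine
cover, in its standard monomial model: the `K`-module of Laurent polynomials
in the homogeneous coordinates is `(Fin ν → ℤ) →₀ K` (`ν = n + 1` variables),
and the sections of `O(d)` on the intersection `⋂_{j ∈ J} D(x_j)` are spanned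
by the Laurent monomials `x^a` with `Σ a = d` which are regular outside `J`,
i.e. `a_i ≥ 0` for `i ∉ J`. -/

namespace CechModel

variable (K : Type) [Field K] (ν : ℕ)

/-- Laurent polynomials in `ν` variables (as a `K`-module). -/
abbrev L : Type := (Fin ν → ℤ) →₀ K

/-- Sections of `O(d)` over `⋂_{j ∈ J} D(x_j)`: the span of the Laurent
monomials of total degree `d` with nonnegative exponents outside `J`. -/
noncomputable def M (J : Finset (Fin ν)) (d : ℤ) : Submodule K (L K ν) :=
  Submodule.span K {x | ∃ a : Fin ν → ℤ, (∑ i, a i) = d ∧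
    (∀ i ∉ J, 0 ≤ a i) ∧ x = Finsupp.single a 1}

lemma M_mono {J J' : Finset (Fin ν)} (h : J ⊆ J') (d : ℤ) :
    M K ν J d ≤ M K ν J' d := by
  apply Submodule.span_mono
  rintro x ⟨a, h1, h2, rfl⟩
  exact ⟨a, h1, fun i hi => h2 i fun hm => hi (h hm), rfl⟩

/-- The degree-`q` term of the Čech complex of `O(d)` for the standard affine
cover of `P^{ν−1}`: a family of sections indexed by the `(q+1)`-element
subsets of the cover. -/
def C (q : ℕ) (d : ℤ) : Type :=
  ∀ J : {J : Finset (Fin ν) // J.card = q + 1}, M K ν J.1 d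

noncomputable instance (q : ℕ) (d : ℤ) : AddCommGroup (C K ν q d) := by
  unfold C; infer_instance

noncomputable instance (q : ℕ) (d : ℤ) : Module K (C K ν q d) := by
  unfold C; infer_instance

/-- The Čech differential: the alternating sum of the natural inclusions. -/
noncomputable def δ (q : ℕ) (d : ℤ) : C K ν q d →ₗ[K] C K ν (q + 1) d :=
  LinearMap.pi fun J =>
    ∑ j ∈ J.1.attach,
      ((-1 : K) ^ (J.1.filter (fun x => x < j.1)).card) •
        ((Submodule.inclusion
            (M_mono K ν (J.1.erase_subset j.1) d)).comp
          (LinearMap.proj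
            (⟨J.1.erase j.1, by rw [Finset.card_erase_of_mem j.2, J.2]; rfl⟩ :
              {J : Finset (Fin ν) // J.card = q + 1})))

end CechModel

open CechModel

/-- The class of `1/(x_0 ⋯ x_{n+1})` in the top term of the Čech complex on
`P^{n+1}` in degree `d = −(n+2)`. -/
noncomputable def topElement (K : Type) [Field K] (n : ℕ) :
    C K (n + 2) (n + 1) (-(n + 2 : ℤ)) := fun J =>
  ⟨Finsupp.single (fun _ => (-1 : ℤ)) 1,
    Submodule.subset_span ⟨fun _ => -1, by simp,
      fun i hi => absurd (by
        have : J.1 = Finset.univ :=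
          Finset.eq_univ_of_card J.1 (by rw [J.2, Fintype.card_fin])
        rw [this]; exact Finset.mem_univ i) hi, rfl⟩⟩


namespace CechAux

variable (K : Type) [Field K] (n : ℕ)

def m0 (ν : ℕ) : Fin ν → ℤ := fun _ => -1

def J0 : {J : Finset (Fin (n+2)) // J.card = (n+1) + 1} :=
  ⟨Finset.univ, by simp⟩

lemma eq_J0 (J : {J : Finset (Fin (n+2)) // J.card = (n+1)+1}) : J = J0 n :=
  Subtype.ext (Finset.eq_univ_of_card J.1 (by rw [J.2]; simp))

noncomputable def ev : C K (n+2) (n+1) (-(n+2:ℤ)) →ₗ[K] L K (n+2) :=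
  (Submodule.subtype _).comp (LinearMap.proj (J0 n))

lemma ev_inj : Function.Injective (ev K n) := by
  intro x y h
  funext J
  rw [eq_J0 n J]
  exact Subtype.ext h

lemma coeff_zero {J : Finset (Fin (n+2))} {i : Fin (n+2)} (hi : i ∉ J) {d : ℤ} :
    M K (n+2) J d ≤ LinearMap.ker (Finsupp.lapply (R := K) (m0 (n+2))) := by
  rw [M, Submodule.span_le]
  rintro x ⟨a, -, hpos, rfl⟩
  simp only [SetLike.mem_coe, LinearMap.mem_ker, Finsupp.lapply_apply]
  rw [Finsupp.single_apply, if_neg]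
  intro h
  have h2 := hpos i hi
  rw [h] at h2
  simp [m0] at h2

lemma delta_apply (d : ℤ) (x : C K (n+2) n d) :
    ((δ K (n+2) n d x) (J0 n) : L K (n+2)) =
      ∑ j ∈ (J0 n).1.attach,
        ((-1:K) ^ (((J0 n).1.filter (fun y => y < j.1)).card)) •
          ((x ⟨(J0 n).1.erase j.1, by
              rw [Finset.card_erase_of_mem j.2, (J0 n).2]; rfl⟩ :
            M K (n+2) ((J0 n).1.erase j.1) d) : L K (n+2)) := by
  show (((LinearMap.pi _ : C K (n+2) n d →ₗ[K] C K (n+2) (n+1) d) x) (J0 n) : L K (n+2)) = _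
  rw [LinearMap.pi_apply, LinearMap.sum_apply, AddSubmonoidClass.coe_finset_sum]
  refine Finset.sum_congr rfl fun j _ => ?_
  simp only [LinearMap.smul_apply, LinearMap.comp_apply, Submodule.coe_inclusion, SetLike.val_smul]
  rfl

end CechAux

namespace CechAux

variable (K : Type) [Field K] (n : ℕ)

lemma exists_nonneg (a : Fin (n+2) → ℤ) (hsum : ∑ k, a k = -(n+2:ℤ)) :
    a = m0 (n+2) ∨ ∃ i, 0 ≤ a i := by
  by_cases h : ∃ i, 0 ≤ a i
  · exact Or.inr h
  push_neg at h
  left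
  funext i
  have hle : ∀ k ∈ Finset.univ, a k ≤ (fun _ => (-1:ℤ)) k := fun k _ => by
    have := h k; show a k ≤ -1; omega
  refine (Finset.sum_eq_sum_iff_of_le hle).mp ?_ i (Finset.mem_univ i)
  rw [hsum]
  simp [Finset.sum_const, mul_comm]

noncomputable def cElt (a : Fin (n+2) → ℤ) (i : Fin (n+2))
    (hsum : ∑ k, a k = -(n+2:ℤ)) (hi : 0 ≤ a i) :
    C K (n+2) n (-(n+2:ℤ)) := fun J' =>
  if h : J'.1 = Finset.univ.erase i then
    ⟨Finsupp.single a 1, Submodule.subset_span ⟨a, hsum, fun k hk => by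
      rw [h] at hk
      have hk2 : k = i := by
        by_contra hne
        exact hk (Finset.mem_erase.mpr ⟨hne, Finset.mem_univ k⟩)
      rw [hk2]; exact hi, rfl⟩⟩
  else 0

lemma delta_cElt (a : Fin (n+2) → ℤ) (i : Fin (n+2))
    (hsum : ∑ k, a k = -(n+2:ℤ)) (hi : 0 ≤ a i) :
    ev K n (δ K (n+2) n (-(n+2:ℤ)) (cElt K n a i hsum hi)) =
      ((-1:K) ^ ((Finset.univ.filter (fun y => y < i)).card)) •
        Finsupp.single a 1 := by
  show ((δ K (n+2) n (-(n+2:ℤ)) (cElt K n a i hsum hi)) (J0 n) : L K (n+2)) = _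
  rw [delta_apply]
  rw [Finset.sum_eq_single_of_mem (⟨i, Finset.mem_univ i⟩ : {x // x ∈ (J0 n).1})
    (Finset.mem_attach _ _)]
  · congr 1
    show ((cElt K n a i hsum hi ⟨Finset.univ.erase i, _⟩ :
        M K (n+2) (Finset.univ.erase i) (-(n+2:ℤ))) : L K (n+2)) = _
    rw [cElt, dif_pos rfl]
  · intro j _ hj
    have hji : j.1 ≠ i := fun h => hj (Subtype.ext h)
    have : cElt K n a i hsum hi ⟨(J0 n).1.erase j.1, by
        rw [Finset.card_erase_of_mem j.2, (J0 n).2]; rfl⟩ = 0 := by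
      rw [cElt, dif_neg]
      show ¬ Finset.univ.erase j.1 = Finset.univ.erase i
      rw [Finset.erase_inj Finset.univ (Finset.mem_univ j.1)]
      exact hji
    rw [this]
    simp

lemma range_le_ker (x : C K (n+2) n (-(n+2:ℤ))) :
    Finsupp.lapply (R := K) (m0 (n+2)) (ev K n (δ K (n+2) n (-(n+2:ℤ)) x)) = 0 := by
  show Finsupp.lapply (R := K) (m0 (n+2))
    ((δ K (n+2) n (-(n+2:ℤ)) x) (J0 n) : L K (n+2)) = 0
  rw [delta_apply, map_sum]
  refine Finset.sum_eq_zero fun j _ => ?_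
  rw [map_smul]
  have hz := coeff_zero K n (J := (J0 n).1.erase j.1) (i := j.1)
    (Finset.notMem_erase j.1 _) (d := -(n+2:ℤ))
    (x ⟨(J0 n).1.erase j.1, by
      rw [Finset.card_erase_of_mem j.2, (J0 n).2]; rfl⟩).2
  rw [LinearMap.mem_ker] at hz
  rw [hz, smul_zero]

lemma ev_top : ev K n (topElement K n) = Finsupp.single (m0 (n+2)) 1 := rfl

lemma key_sup :
    LinearMap.range (δ K (n+2) n (-(n+2:ℤ))) ⊔
      Submodule.span K {topElement K n} = ⊤ := by
  set T := LinearMap.range (δ K (n+2) n (-(n+2:ℤ))) ⊔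
      Submodule.span K {topElement K n} with hTdef
  have hle : M K (n+2) Finset.univ (-(n+2:ℤ)) ≤ Submodule.map (ev K n) T := by
    rw [M, Submodule.span_le]
    rintro x ⟨a, hsum, -, rfl⟩
    rcases exists_nonneg n a hsum with h | ⟨i, hi⟩
    · subst h
      exact ⟨topElement K n, Submodule.mem_sup_right (Submodule.mem_span_singleton_self _), rfl⟩
    · set s : K := (-1:K) ^ ((Finset.univ.filter (fun y => y < i)).card) with hs
      refine ⟨δ K (n+2) n (-(n+2:ℤ)) (s • cElt K n a i hsum hi),
        Submodule.mem_sup_left (LinearMap.mem_range_self _ _), ?_⟩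
      rw [map_smul, map_smul, delta_cElt, smul_smul, ← hs]
      have : s * s = 1 := by
        rw [hs, ← pow_add, ← two_mul, pow_mul]
        simp
      rw [this, one_smul]
  rw [eq_top_iff]
  intro x _
  have hx : ev K n x ∈ Submodule.map (ev K n) T := hle (x (J0 n)).2
  obtain ⟨t, ht, hev⟩ := hx
  rwa [← ev_inj K n hev]

end CechAux

/-- For projective space `P^{n+1}` over a field `K`, the top Čech cohomology
`H^{n+1}(P^{n+1}, O(−n−2))` — the cokernel of the last Čech differential for
the standard affine cover — is one-dimensional over `K`, with basis the class
of `1/(x_0 ⋯ x_{n+1})`. -/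
theorem top_cech_cohomology_of_minus_n_minus_one
    (K : Type) [Field K] (n : ℕ) :
    Module.finrank K
      (C K (n + 2) (n + 1) (-(n + 2 : ℤ)) ⧸
        LinearMap.range (δ K (n + 2) n (-(n + 2 : ℤ)))) = 1 ∧
    Submodule.span K
        {(Submodule.Quotient.mk (topElement K n) :
          C K (n + 2) (n + 1) (-(n + 2 : ℤ)) ⧸
            LinearMap.range (δ K (n + 2) n (-(n + 2 : ℤ))))} = ⊤ := by
  have hspan : Submodule.span K
      {(Submodule.Quotient.mk (topElement K n) :
        C K (n + 2) (n + 1) (-(n + 2 : ℤ)) ⧸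
          LinearMap.range (δ K (n + 2) n (-(n + 2 : ℤ))))} = ⊤ := by
    have h1 : Submodule.span K
        {(Submodule.Quotient.mk (topElement K n) :
          C K (n + 2) (n + 1) (-(n + 2 : ℤ)) ⧸
            LinearMap.range (δ K (n + 2) n (-(n + 2 : ℤ))))} =
        Submodule.map (LinearMap.range (δ K (n+2) n (-(n+2:ℤ)))).mkQ
          (Submodule.span K {topElement K n}) := by
      rw [Submodule.map_span, Set.image_singleton]; rfl
    rw [h1, Submodule.map_mkQ_eq_top]
    exact CechAux.key_sup K n
  refine ⟨?_, hspan⟩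
  have hne : (Submodule.Quotient.mk (topElement K n) :
      C K (n + 2) (n + 1) (-(n + 2 : ℤ)) ⧸
        LinearMap.range (δ K (n + 2) n (-(n + 2 : ℤ)))) ≠ 0 := by
    intro h
    rw [Submodule.Quotient.mk_eq_zero] at h
    obtain ⟨x, hx⟩ := h
    have h2 := CechAux.range_le_ker K n x
    rw [hx, CechAux.ev_top] at h2
    simp [Finsupp.lapply_apply, Finsupp.single_apply] at h2
  refine finrank_eq_one _ hne ?_
  intro w
  obtain ⟨x, rfl⟩ := Submodule.Quotient.mk_surjective _ w
  have hx : x ∈ LinearMap.range (δ K (n+2) n (-(n+2:ℤ))) ⊔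
      Submodule.span K {topElement K n} := by
    rw [CechAux.key_sup]; trivial
  obtain ⟨r, hr, z, hz, rfl⟩ := Submodule.mem_sup.mp hx
  obtain ⟨c, rfl⟩ := Submodule.mem_span_singleton.mp hz
  refine ⟨c, ?_⟩
  rw [Submodule.Quotient.mk_add, (Submodule.Quotient.mk_eq_zero _).mpr hr,
    zero_add, Submodule.Quotient.mk_smul]
end

section
/- Let K^• be a bounded cochain complex over a commutative ring with a decomposition of each term K^i = ⊕_{p+q=i} C^{p,q} coming from a double complex with horizontal differential φ (degree (1,0)) and vertical differential ∂ (degree (0,1)), and let h be a degree (0,−1) map with ∂h + h∂ = id − ιρ on each column, where each column is homotopy equivalent to its cohomology. Then the induced differential on the reduced total complex ⊕_{p+q=i} H^q(C^{p,•}) has block components φ^{(r)}_{p,q}: H^q(C^{p,•}) → H^{q−r+1}(C^{p+r,•}) given by ±ρ ∘ (φ ∘ h)^{r−1} ∘ φ ∘ ι for r ≥ 1, and these blocks assemble into a map squaring to zero. -/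
/-- Weyman differential from a double complex, via Gauss reduction.
`V` is the total module of a bounded double complex with grading
`C p q ⊆ V`, horizontal differential `φ` (degree `(1,0)`), vertical
differential `dv` (degree `(0,1)`, anticommuting with `φ` in the total
complex), and `W` is the total reduced module with grading `H p q ⊆ W`,
included/projected via `ι`, `ρ` which are homotopy equivalences on each
column: `ρ ∘ ι = id` and `dv ∘ h + h ∘ dv = id − ι ∘ ρ` for a degree `(0,−1)`
homotopy `h` (satisfying the usual side conditions). Then the blocks
`ψ r = ± ρ ∘ (φ ∘ h)^{r−1} ∘ φ ∘ ι` of the induced differential on the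
reduced total complex map `H p q` to `H (p+r) (q−r+1)`, and they assemble
into a map squaring to zero: for every total shift `t`,
`Σ_{r+s = t+2, r,s ≥ 1} ψ s ∘ ψ r = 0`. -/
theorem weyman_differential_blocks_square_zero
    {R V W : Type} [CommRing R] [AddCommGroup V] [Module R V]
    [AddCommGroup W] [Module R W]
    (C : ℤ → ℤ → Submodule R V) (H : ℤ → ℤ → Submodule R W)
    (φ dv htp : Module.End R V) (ι : W →ₗ[R] V) (ρ : V →ₗ[R] W)
    -- the differentials and the homotopy respect the (shifted) grading
    (hφ : ∀ p q, C p q ≤ (C (p + 1) q).comap φ)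
    (hdv : ∀ p q, C p q ≤ (C p (q + 1)).comap dv)
    (hh : ∀ p q, C p q ≤ (C p (q - 1)).comap htp)
    (hι : ∀ p q, H p q ≤ (C p q).comap ι)
    (hρ : ∀ p q, C p q ≤ (H p q).comap ρ)
    -- double complex relations
    (hφφ : φ * φ = 0) (hdvdv : dv * dv = 0) (hanti : φ * dv + dv * φ = 0)
    -- homotopy equivalence of each column with its cohomology
    (hρι : ρ ∘ₗ ι = LinearMap.id)
    (hhtp : dv * htp + htp * dv = 1 - ι ∘ₗ ρ)
    -- the usual side conditions of the Gauss reduction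
    (hdvι : dv ∘ₗ ι = 0) (hρdv : ρ ∘ₗ dv = 0)
    (hhι : htp ∘ₗ ι = 0) (hρh : ρ ∘ₗ htp = 0) (hhh : htp * htp = 0) :
    -- the blocks of the Weyman differential
    (∀ k : ℕ, ∀ p q : ℤ,
      H p q ≤ (H (p + (k + 1)) (q - (k + 1) + 1)).comap
        (ρ ∘ₗ ((φ * htp) ^ k * φ : Module.End R V) ∘ₗ ι)) ∧
    -- and they assemble into a differential squaring to zero
    (∀ t : ℕ,
      ∑ k ∈ Finset.range (t + 1),
        (ρ ∘ₗ ((φ * htp) ^ (t - k) * φ : Module.End R V) ∘ₗ ι) ∘ₗ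
          (ρ ∘ₗ ((φ * htp) ^ k * φ : Module.End R V) ∘ₗ ι) = 0) := by
  -- pointwise side conditions
  have hρdv0 : ∀ v : V, ρ (dv v) = 0 := fun v => by
    simpa using DFunLike.congr_fun hρdv v
  have hdvι0 : ∀ w : W, dv (ι w) = 0 := fun w => by
    simpa using DFunLike.congr_fun hdvι w
  have hanti0 : ∀ v : V, φ (dv v) + dv (φ v) = 0 := fun v => by
    simpa [Module.End.mul_apply] using DFunLike.congr_fun hanti v
  -- operator-level consequences
  have hφdv : φ * dv = -(dv * φ) := eq_neg_of_add_eq_zero_left hanti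
  have hP : (ι ∘ₗ ρ : Module.End R V) = 1 - dv * htp - htp * dv := by
    rw [sub_sub, hhtp, sub_sub_cancel]
  have shift : ∀ n : ℕ, φ * (htp * φ) ^ n = (φ * htp) ^ n * φ := by
    intro n
    induction n with
    | zero => simp
    | succ n ih => rw [pow_succ', ← mul_assoc, ← mul_assoc, mul_assoc (φ*htp), ih,
        pow_succ', mul_assoc, mul_assoc, ← mul_assoc φ htp]
  constructor
  · -- part 1: grading
    have grade : ∀ (k : ℕ) (p q : ℤ), ∀ x ∈ C p q,
        ((φ * htp) ^ k * φ) x ∈ C (p + k + 1) (q - k) := by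
      intro k
      induction k with
      | zero =>
        intro p q x hx
        simpa using hφ p q hx
      | succ k ih =>
        intro p q x hx
        have h1 := ih p q x hx
        have h2 := hh _ _ h1
        have h3 := hφ _ _ h2
        have e : ((φ * htp) ^ (k+1) * φ) x = φ (htp (((φ * htp) ^ k * φ) x)) := by
          rw [pow_succ', mul_assoc]
          simp [Module.End.mul_apply]
        rw [e]
        have e1 : (p : ℤ) + (k+1 : ℕ) + 1 = p + k + 1 + 1 := by push_cast; ring
        have e2 : (q : ℤ) - (k+1 : ℕ) = q - k - 1 := by push_cast; ring
        rw [e1, e2]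
        exact h3
    intro k p q x hx
    simp only [Submodule.mem_comap, LinearMap.comp_apply]
    have h1 := grade k p q (ι x) (hι p q hx)
    have h2 := hρ _ _ h1
    have e1 : (p : ℤ) + ((k : ℤ) + 1) = p + k + 1 := by ring
    have e2 : (q : ℤ) - ((k : ℤ) + 1) + 1 = q - k := by ring
    rw [e1, e2]
    exact h2
  · -- part 2: squares to zero
    intro t
    have sand : ∀ f g : Module.End R V,
        (ρ ∘ₗ (f : Module.End R V) ∘ₗ ι) ∘ₗ (ρ ∘ₗ (g : Module.End R V) ∘ₗ ι)
          = ρ ∘ₗ ((f * ((ι ∘ₗ ρ) * g) : Module.End R V)) ∘ₗ ι := by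
      intro f g
      ext x
      simp [Module.End.mul_apply]
    have inner : ∀ Y : Module.End R V,
        φ * ((ι ∘ₗ ρ : Module.End R V) * (φ * Y))
          = dv * (φ * (htp * (φ * Y))) - φ * (htp * (dv * (φ * Y))) := by
      intro Y
      have h0 : φ * (φ * Y) = 0 := by rw [← mul_assoc, hφφ, zero_mul]
      have h1 : φ * (dv * (htp * (φ * Y))) = -(dv * (φ * (htp * (φ * Y)))) := by
        rw [← mul_assoc, hφdv, neg_mul, mul_assoc]
      rw [hP]
      simp only [sub_mul, one_mul, mul_sub, mul_assoc]
      rw [h0, h1]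
      abel
    have key : ∀ a b : ℕ,
        ((φ * htp) ^ a * φ) * ((ι ∘ₗ ρ : Module.End R V) * ((φ * htp) ^ b * φ))
          = (φ * htp) ^ a * (dv * (φ * (htp * φ) ^ (b+1)))
            - (φ * htp) ^ (a+1) * (dv * (φ * (htp * φ) ^ b)) := by
      intro a b
      rw [← shift b]
      calc ((φ * htp) ^ a * φ) * ((ι ∘ₗ ρ : Module.End R V) * (φ * (htp * φ) ^ b))
          = (φ * htp) ^ a * (φ * ((ι ∘ₗ ρ : Module.End R V) * (φ * (htp * φ) ^ b))) := by
            simp only [mul_assoc]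
        _ = (φ * htp) ^ a * (dv * (φ * (htp * (φ * (htp * φ) ^ b)))
              - φ * (htp * (dv * (φ * (htp * φ) ^ b)))) := by rw [inner]
        _ = (φ * htp) ^ a * (dv * (φ * (htp * φ) ^ (b+1)))
            - (φ * htp) ^ (a+1) * (dv * (φ * (htp * φ) ^ b)) := by
            rw [pow_succ' (htp * φ) b, pow_succ (φ * htp) a]
            simp only [mul_sub, mul_assoc]
    have tele := Finset.sum_range_sub
      (fun k => ρ ∘ₗ (((φ * htp) ^ (t+1-k) * (dv * (φ * (htp * φ) ^ k)) : Module.End R V)) ∘ₗ ι)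
      (t+1)
    have step : ∀ k ∈ Finset.range (t+1),
        (ρ ∘ₗ ((φ * htp) ^ (t - k) * φ : Module.End R V) ∘ₗ ι) ∘ₗ
          (ρ ∘ₗ ((φ * htp) ^ k * φ : Module.End R V) ∘ₗ ι)
        = (ρ ∘ₗ (((φ * htp) ^ (t+1-(k+1)) * (dv * (φ * (htp * φ) ^ (k+1))) : Module.End R V)) ∘ₗ ι)
          - (ρ ∘ₗ (((φ * htp) ^ (t+1-k) * (dv * (φ * (htp * φ) ^ k)) : Module.End R V)) ∘ₗ ι) := by
      intro k hk
      have hk' : k ≤ t := by simpa [Nat.lt_succ_iff] using hk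
      have e1 : t + 1 - (k+1) = t - k := by omega
      have e2 : t + 1 - k = t - k + 1 := by omega
      rw [sand, key (t-k) k, e1, e2]
      simp only [LinearMap.comp_sub, LinearMap.sub_comp]
    rw [Finset.sum_congr rfl step, tele]
    have z1 : (ρ ∘ₗ (((φ * htp) ^ (t+1-(t+1)) * (dv * (φ * (htp * φ) ^ (t+1))) : Module.End R V)) ∘ₗ ι) = 0 := by
      ext x
      simp [Module.End.mul_apply, hρdv0]
    have z2 : (ρ ∘ₗ (((φ * htp) ^ (t+1-0) * (dv * (φ * (htp * φ) ^ 0)) : Module.End R V)) ∘ₗ ι) = 0 := by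
      ext x
      have hdφι : dv (φ (ι x)) = 0 := by
        have := hanti0 (ι x)
        rw [hdvι0 x] at this
        simpa using this
      simp [Module.End.mul_apply, hdφι]
    rw [z1, z2, sub_zero]
end

section
/- Let A_1 = {(0,0),(2,2),(1,3)}, A_2 = {(0,0),(2,0),(1,2)}, A_3 = {(3,0),(1,1)} ⊂ ℤ^2. The system f_1 = a_1 + a_2 x^2 y^2 + a_3 x y^3, f_2 = b_1 + b_2 x^2 + b_3 x y^2, f_3 = c_1 x^3 + c_2 x y, with specific coefficient values (a, b, c), has a common zero (x, y) ∈ (ℂ^*)^2 whenever the polynomial Δ (the 20-term eliminant stated in the paper) vanishes at (a, b, c) and (a, b, c) is generic—equivalently, Δ evaluated on the coefficients of f_1, f_2, f_3 is zero whenever the system has a common solution in the torus. -/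
set_option maxHeartbeats 2000000 in
/-- For the support sets `A₁ = {(0,0),(2,2),(1,3)}`, `A₂ = {(0,0),(2,0),(1,2)}`,
`A₃ = {(3,0),(1,1)}`, if the system
`f₁ = a₁ + a₂ x²y² + a₃ x y³`, `f₂ = b₁ + b₂ x² + b₃ x y²`, `f₃ = c₁ x³ + c₂ x y`
has a common zero `(x, y) ∈ (ℂ*)²`, then the 20-term eliminant `Δ` vanishes at
the coefficients. -/
theorem eliminant_vanishes_on_solvable_systems
    (a₁ a₂ a₃ b₁ b₂ b₃ c₁ c₂ : ℂ)
    (h : ∃ x y : ℂ, x ≠ 0 ∧ y ≠ 0 ∧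
      a₁ + a₂ * x ^ 2 * y ^ 2 + a₃ * x * y ^ 3 = 0 ∧
      b₁ + b₂ * x ^ 2 + b₃ * x * y ^ 2 = 0 ∧
      c₁ * x ^ 3 + c₂ * x * y = 0) :
      a₁ ^ 5 * b₃ ^ 7 * c₁ ^ 6 * c₂
    + 3 * a₁ ^ 4 * a₂ * b₂ ^ 2 * b₃ ^ 5 * c₁ ^ 4 * c₂ ^ 3
    + 3 * a₁ ^ 3 * a₂ ^ 2 * b₂ ^ 4 * b₃ ^ 3 * c₁ ^ 2 * c₂ ^ 5
    - 13 * a₁ ^ 3 * a₂ * a₃ * b₁ ^ 2 * b₂ * b₃ ^ 4 * c₁ ^ 5 * c₂ ^ 2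
    - 7 * a₁ ^ 3 * a₃ ^ 2 * b₁ * b₂ ^ 3 * b₃ ^ 3 * c₁ ^ 4 * c₂ ^ 3
    + 6 * a₁ ^ 2 * a₂ ^ 3 * b₁ ^ 3 * b₂ * b₃ ^ 3 * c₁ ^ 4 * c₂ ^ 3
    + a₁ ^ 2 * a₂ ^ 3 * b₂ ^ 6 * b₃ * c₂ ^ 7
    - a₁ ^ 2 * a₂ ^ 2 * a₃ * b₁ ^ 2 * b₂ ^ 3 * b₃ ^ 2 * c₁ ^ 3 * c₂ ^ 4
    + 5 * a₁ ^ 2 * a₂ * a₃ ^ 2 * b₁ ^ 4 * b₃ ^ 3 * c₁ ^ 6 * c₂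
    - a₁ ^ 2 * a₂ * a₃ ^ 2 * b₁ * b₂ ^ 5 * b₃ * c₁ ^ 2 * c₂ ^ 5
    + 14 * a₁ ^ 2 * a₃ ^ 3 * b₁ ^ 3 * b₂ ^ 2 * b₃ ^ 2 * c₁ ^ 5 * c₂ ^ 2
    + a₁ ^ 2 * a₃ ^ 3 * b₂ ^ 7 * c₁ * c₂ ^ 6
    - 2 * a₁ * a₂ ^ 4 * b₁ ^ 3 * b₂ ^ 3 * b₃ * c₁ ^ 2 * c₂ ^ 5
    - 5 * a₁ * a₂ ^ 3 * a₃ * b₁ ^ 5 * b₃ ^ 2 * c₁ ^ 5 * c₂ ^ 2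
    + 2 * a₁ * a₂ ^ 2 * a₃ ^ 2 * b₁ ^ 4 * b₂ ^ 2 * b₃ * c₁ ^ 4 * c₂ ^ 3
    - 2 * a₁ * a₂ * a₃ ^ 3 * b₁ ^ 3 * b₂ ^ 4 * c₁ ^ 3 * c₂ ^ 4
    - 7 * a₁ * a₃ ^ 4 * b₁ ^ 5 * b₂ * b₃ * c₁ ^ 6 * c₂
    + a₂ ^ 5 * b₁ ^ 6 * b₃ * c₁ ^ 4 * c₂ ^ 3
    + a₂ ^ 2 * a₃ ^ 3 * b₁ ^ 6 * b₂ * c₁ ^ 5 * c₂ ^ 2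
    + a₃ ^ 5 * b₁ ^ 7 * c₁ ^ 7 = 0 := by
  obtain ⟨x, y, hx, hy, h1, h2, h3⟩ := h
  have hg : c₁ * x ^ 2 + c₂ * y = 0 := by
    rcases mul_eq_zero.mp (show x * (c₁ * x ^ 2 + c₂ * y) = 0 by linear_combination h3) with h | h
    · exact absurd h hx
    · exact h
  have hxy : x ^ 4 * y ≠ 0 := mul_ne_zero (pow_ne_zero 4 hx) hy
  have key : x ^ 4 * y * (a₁ ^ 5 * b₃ ^ 7 * c₁ ^ 6 * c₂
    + 3 * a₁ ^ 4 * a₂ * b₂ ^ 2 * b₃ ^ 5 * c₁ ^ 4 * c₂ ^ 3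
    + 3 * a₁ ^ 3 * a₂ ^ 2 * b₂ ^ 4 * b₃ ^ 3 * c₁ ^ 2 * c₂ ^ 5
    - 13 * a₁ ^ 3 * a₂ * a₃ * b₁ ^ 2 * b₂ * b₃ ^ 4 * c₁ ^ 5 * c₂ ^ 2
    - 7 * a₁ ^ 3 * a₃ ^ 2 * b₁ * b₂ ^ 3 * b₃ ^ 3 * c₁ ^ 4 * c₂ ^ 3
    + 6 * a₁ ^ 2 * a₂ ^ 3 * b₁ ^ 3 * b₂ * b₃ ^ 3 * c₁ ^ 4 * c₂ ^ 3
    + a₁ ^ 2 * a₂ ^ 3 * b₂ ^ 6 * b₃ * c₂ ^ 7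
    - a₁ ^ 2 * a₂ ^ 2 * a₃ * b₁ ^ 2 * b₂ ^ 3 * b₃ ^ 2 * c₁ ^ 3 * c₂ ^ 4
    + 5 * a₁ ^ 2 * a₂ * a₃ ^ 2 * b₁ ^ 4 * b₃ ^ 3 * c₁ ^ 6 * c₂
    - a₁ ^ 2 * a₂ * a₃ ^ 2 * b₁ * b₂ ^ 5 * b₃ * c₁ ^ 2 * c₂ ^ 5
    + 14 * a₁ ^ 2 * a₃ ^ 3 * b₁ ^ 3 * b₂ ^ 2 * b₃ ^ 2 * c₁ ^ 5 * c₂ ^ 2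
    + a₁ ^ 2 * a₃ ^ 3 * b₂ ^ 7 * c₁ * c₂ ^ 6
    - 2 * a₁ * a₂ ^ 4 * b₁ ^ 3 * b₂ ^ 3 * b₃ * c₁ ^ 2 * c₂ ^ 5
    - 5 * a₁ * a₂ ^ 3 * a₃ * b₁ ^ 5 * b₃ ^ 2 * c₁ ^ 5 * c₂ ^ 2
    + 2 * a₁ * a₂ ^ 2 * a₃ ^ 2 * b₁ ^ 4 * b₂ ^ 2 * b₃ * c₁ ^ 4 * c₂ ^ 3
    - 2 * a₁ * a₂ * a₃ ^ 3 * b₁ ^ 3 * b₂ ^ 4 * c₁ ^ 3 * c₂ ^ 4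
    - 7 * a₁ * a₃ ^ 4 * b₁ ^ 5 * b₂ * b₃ * c₁ ^ 6 * c₂
    + a₂ ^ 5 * b₁ ^ 6 * b₃ * c₁ ^ 4 * c₂ ^ 3
    + a₂ ^ 2 * a₃ ^ 3 * b₁ ^ 6 * b₂ * c₁ ^ 5 * c₂ ^ 2
    + a₃ ^ 5 * b₁ ^ 7 * c₁ ^ 7) = 0 := by
    linear_combination
      (x * y * a₂ * a₃ ^ 3 * b₁ ^ 6 * b₃ * c₁ ^ 5 * c₂ ^ 2 + x * y * a₁ ^ 3 * a₃ * b₁ ^ 2 * b₃ ^ 5 * c₁ ^ 5 * c₂ ^ 2 - 3 * x * y * a₁ * a₂ * a₃ ^ 2 * b₁ ^ 4 * b₂ * b₃ ^ 2 * c₁ ^ 4 * c₂ ^ 3 - x * y * a₁ ^ 2 * a₂ ^ 2 * b₁ ^ 3 * b₃ ^ 4 * c₁ ^ 4 * c₂ ^ 3 - x * y * a₁ ^ 4 * b₂ * b₃ ^ 6 * c₁ ^ 4 * c₂ ^ 3 - x * y * a₁ * a₃ ^ 3 * b₁ ^ 3 * b₂ ^ 3 * b₃ * c₁ ^ 3 *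 c₂ ^ 4 + 4 * x * y * a₁ ^ 2 * a₂ * a₃ * b₁ ^ 2 * b₂ ^ 2 * b₃ ^ 3 * c₁ ^ 3 * c₂ ^ 4 + x * y * a₁ * a₂ ^ 3 * b₁ ^ 3 * b₂ ^ 2 * b₃ ^ 2 * c₁ ^ 2 * c₂ ^ 5 + 2 * x * y * a₁ ^ 2 * a₃ ^ 2 * b₁ * b₂ ^ 4 * b₃ ^ 2 * c₁ ^ 2 * c₂ ^ 5 - 2 * x * y * a₁ ^ 3 * a₂ * b₂ ^ 3 * b₃ ^ 4 * c₁ ^ 2 * c₂ ^ 5 - x * y * a₁ ^ 2 * a₂ ^ 2 * b₂ ^ 5 * b₃ ^ 2 * c₂ ^ 7 - y ^ 2 * a₃ ^ 4 * b₁ ^ 6 * b₃ * c₁ ^ 5 * c₂ ^ 2 + 5 * y ^ 2 * a₁ * a₃ ^ 3 * b₁ ^ 4 * b₂ * b₃ ^ 2 * c₁ ^ 4 * c₂ ^ 3 - 2 * y ^ 2 * a₁ ^ 2 * a₂ * a₃ * b₁ ^ 3 * b₃ ^ 4 * c₁ ^ 4 * c₂ ^ 3 + y ^ 2 * a₁ *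 a₂ ^ 3 * b₁ ^ 4 * b₃ ^ 3 * c₁ ^ 3 * c₂ ^ 4 - 6 * y ^ 2 * a₁ ^ 2 * a₃ ^ 2 * b₁ ^ 2 * b₂ ^ 2 * b₃ ^ 3 * c₁ ^ 3 * c₂ ^ 4 + 2 * y ^ 2 * a₁ ^ 3 * a₂ * b₁ * b₂ * b₃ ^ 5 * c₁ ^ 3 * c₂ ^ 4 - 2 * y ^ 2 * a₁ * a₂ ^ 2 * a₃ * b₁ ^ 3 * b₂ ^ 2 * b₃ ^ 2 * c₁ ^ 2 * c₂ ^ 5 + y ^ 2 * a₁ ^ 3 * a₃ * b₂ ^ 3 * b₃ ^ 4 * c₁ ^ 2 * c₂ ^ 5 + 2 * y ^ 2 * a₁ ^ 2 * a₂ ^ 2 * b₁ * b₂ ^ 3 * b₃ ^ 3 * c₁ * c₂ ^ 6 + y ^ 2 * a₁ ^ 2 * a₂ * a₃ * b₂ ^ 5 * b₃ ^ 2 * c₂ ^ 7 - x * a₃ ^ 4 * b₁ ^ 6 * b₂ * c₁ ^ 5 * c₂ ^ 2 + 2 * x * a₁ * a₂ * a₃ ^ 2 * b₁ ^ 5 *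 b₃ ^ 2 * c₁ ^ 5 * c₂ ^ 2 + x * a₁ ^ 4 * b₁ * b₃ ^ 6 * c₁ ^ 5 * c₂ ^ 2 - x * a₂ ^ 3 * a₃ * b₁ ^ 6 * b₃ * c₁ ^ 4 * c₂ ^ 3 + 4 * x * a₁ * a₃ ^ 3 * b₁ ^ 4 * b₂ ^ 2 * b₃ * c₁ ^ 4 * c₂ ^ 3 - 7 * x * a₁ ^ 2 * a₂ * a₃ * b₁ ^ 3 * b₂ * b₃ ^ 3 * c₁ ^ 4 * c₂ ^ 3 + 2 * x * a₁ * a₂ ^ 3 * b₁ ^ 4 * b₂ * b₃ ^ 2 * c₁ ^ 3 * c₂ ^ 4 - 3 * x * a₁ ^ 2 * a₃ ^ 2 * b₁ ^ 2 * b₂ ^ 3 * b₃ ^ 2 * c₁ ^ 3 * c₂ ^ 4 + 2 * x * a₁ ^ 3 * a₂ * b₁ * b₂ ^ 2 * b₃ ^ 4 * c₁ ^ 3 * c₂ ^ 4 + x * a₁ ^ 2 * a₂ ^ 2 * b₁ * b₂ ^ 4 * b₃ ^ 2 * c₁ * c₂ ^ 6 - y * a₁ * a₃ ^ 3 * b₁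 ^ 5 * b₃ ^ 2 * c₁ ^ 5 * c₂ ^ 2 + y * a₂ ^ 2 * a₃ ^ 2 * b₁ ^ 6 * b₃ * c₁ ^ 4 * c₂ ^ 3 + 4 * y * a₁ ^ 2 * a₃ ^ 2 * b₁ ^ 3 * b₂ * b₃ ^ 3 * c₁ ^ 4 * c₂ ^ 3 - y * a₁ ^ 3 * a₂ * b₁ ^ 2 * b₃ ^ 5 * c₁ ^ 4 * c₂ ^ 3 - 2 * y * a₁ * a₂ ^ 2 * a₃ * b₁ ^ 4 * b₂ * b₃ ^ 2 * c₁ ^ 3 * c₂ ^ 4 - 3 * y * a₁ ^ 3 * a₃ * b₁ * b₂ ^ 2 * b₃ ^ 4 * c₁ ^ 3 * c₂ ^ 4 - 2 * y * a₁ * a₂ * a₃ ^ 2 * b₁ ^ 3 * b₂ ^ 3 * b₃ * c₁ ^ 2 * c₂ ^ 5 + 3 * y * a₁ ^ 2 * a₂ ^ 2 * b₁ ^ 2 * b₂ ^ 2 * b₃ ^ 3 * c₁ ^ 2 * c₂ ^ 5 + y * a₁ ^ 2 * a₂ * a₃ * b₁ * b₂ ^ 4 * b₃ ^ 2 * c₁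 * c₂ ^ 6 + y * a₁ ^ 2 * a₃ ^ 2 * b₂ ^ 6 * b₃ * c₂ ^ 7 - a₁ ^ 2 * a₃ ^ 2 * b₁ ^ 4 * b₃ ^ 3 * c₁ ^ 5 * c₂ ^ 2 - a₂ * a₃ ^ 3 * b₁ ^ 6 * b₂ * c₁ ^ 4 * c₂ ^ 3 + 3 * a₁ * a₂ ^ 2 * a₃ * b₁ ^ 5 * b₃ ^ 2 * c₁ ^ 4 * c₂ ^ 3 + 2 * a₁ ^ 3 * a₃ * b₁ ^ 2 * b₂ * b₃ ^ 4 * c₁ ^ 4 * c₂ ^ 3 - a₂ ^ 4 * b₁ ^ 6 * b₃ * c₁ ^ 3 * c₂ ^ 4 + a₁ * a₂ * a₃ ^ 2 * b₁ ^ 4 * b₂ ^ 2 * b₃ * c₁ ^ 3 * c₂ ^ 4 - 3 * a₁ ^ 2 * a₂ ^ 2 * b₁ ^ 3 * b₂ * b₃ ^ 3 * c₁ ^ 3 * c₂ ^ 4 + a₁ * a₃ ^ 3 * b₁ ^ 3 * b₂ ^ 4 * c₁ ^ 2 * c₂ ^ 5 - 2 * a₁ ^ 2 * a₂ * a₃ *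 b₁ ^ 2 * b₂ ^ 3 * b₃ ^ 2 * c₁ ^ 2 * c₂ ^ 5 + a₁ * a₂ ^ 3 * b₁ ^ 3 * b₂ ^ 3 * b₃ * c₁ * c₂ ^ 6 - a₁ ^ 2 * a₃ ^ 2 * b₁ * b₂ ^ 5 * b₃ * c₁ * c₂ ^ 6) * h1 +
      (-x ^ 2 * y * a₂ ^ 2 * a₃ ^ 3 * b₁ ^ 6 * c₁ ^ 5 * c₂ ^ 2 - x ^ 2 * y * a₁ ^ 3 * a₂ * a₃ * b₁ ^ 2 * b₃ ^ 4 * c₁ ^ 5 * c₂ ^ 2 + 3 * x ^ 2 * y * a₁ * a₂ ^ 2 * a₃ ^ 2 * b₁ ^ 4 * b₂ * b₃ * c₁ ^ 4 * c₂ ^ 3 + x ^ 2 * y * a₁ ^ 2 * a₂ ^ 3 * b₁ ^ 3 * b₃ ^ 3 * c₁ ^ 4 * c₂ ^ 3 + x ^ 2 * y * a₁ ^ 4 * a₂ * b₂ * b₃ ^ 5 * c₁ ^ 4 * c₂ ^ 3 + x ^ 2 * y * a₁ * a₂ * a₃ ^ 3 * b₁ ^ 3 * b₂ ^ 3 * c₁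 ^ 3 * c₂ ^ 4 - 4 * x ^ 2 * y * a₁ ^ 2 * a₂ ^ 2 * a₃ * b₁ ^ 2 * b₂ ^ 2 * b₃ ^ 2 * c₁ ^ 3 * c₂ ^ 4 - x ^ 2 * y * a₁ * a₂ ^ 4 * b₁ ^ 3 * b₂ ^ 2 * b₃ * c₁ ^ 2 * c₂ ^ 5 - 2 * x ^ 2 * y * a₁ ^ 2 * a₂ * a₃ ^ 2 * b₁ * b₂ ^ 4 * b₃ * c₁ ^ 2 * c₂ ^ 5 + 2 * x ^ 2 * y * a₁ ^ 3 * a₂ ^ 2 * b₂ ^ 3 * b₃ ^ 3 * c₁ ^ 2 * c₂ ^ 5 + x ^ 2 * y * a₁ ^ 2 * a₂ ^ 3 * b₂ ^ 5 * b₃ * c₂ ^ 7 - x * y ^ 2 * a₁ ^ 3 * a₃ ^ 2 * b₁ ^ 2 * b₃ ^ 4 * c₁ ^ 5 * c₂ ^ 2 - 2 * x * y ^ 2 * a₁ * a₂ * a₃ ^ 3 * b₁ ^ 4 * b₂ * b₃ * c₁ ^ 4 * c₂ ^ 3 + 3 * x * y ^ 2 * a₁ ^ 2 * a₂ ^ 2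 * a₃ * b₁ ^ 3 * b₃ ^ 3 * c₁ ^ 4 * c₂ ^ 3 + x * y ^ 2 * a₁ ^ 4 * a₃ * b₂ * b₃ ^ 5 * c₁ ^ 4 * c₂ ^ 3 + x * y ^ 2 * a₁ * a₃ ^ 4 * b₁ ^ 3 * b₂ ^ 3 * c₁ ^ 3 * c₂ ^ 4 - x * y ^ 2 * a₁ * a₂ ^ 4 * b₁ ^ 4 * b₃ ^ 2 * c₁ ^ 3 * c₂ ^ 4 + 2 * x * y ^ 2 * a₁ ^ 2 * a₂ * a₃ ^ 2 * b₁ ^ 2 * b₂ ^ 2 * b₃ ^ 2 * c₁ ^ 3 * c₂ ^ 4 - 2 * x * y ^ 2 * a₁ ^ 3 * a₂ ^ 2 * b₁ * b₂ * b₃ ^ 4 * c₁ ^ 3 * c₂ ^ 4 + x * y ^ 2 * a₁ * a₂ ^ 3 * a₃ * b₁ ^ 3 * b₂ ^ 2 * b₃ * c₁ ^ 2 * c₂ ^ 5 - 2 * x * y ^ 2 * a₁ ^ 2 * a₃ ^ 3 * b₁ * b₂ ^ 4 * b₃ * c₁ ^ 2 * c₂ ^ 5 + x * y ^ 2 * a₁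 ^ 3 * a₂ * a₃ * b₂ ^ 3 * b₃ ^ 3 * c₁ ^ 2 * c₂ ^ 5 - 2 * x * y ^ 2 * a₁ ^ 2 * a₂ ^ 3 * b₁ * b₂ ^ 3 * b₃ ^ 2 * c₁ * c₂ ^ 6 + y ^ 3 * a₃ ^ 5 * b₁ ^ 6 * c₁ ^ 5 * c₂ ^ 2 - 5 * y ^ 3 * a₁ * a₃ ^ 4 * b₁ ^ 4 * b₂ * b₃ * c₁ ^ 4 * c₂ ^ 3 + 2 * y ^ 3 * a₁ ^ 2 * a₂ * a₃ ^ 2 * b₁ ^ 3 * b₃ ^ 3 * c₁ ^ 4 * c₂ ^ 3 - y ^ 3 * a₁ * a₂ ^ 3 * a₃ * b₁ ^ 4 * b₃ ^ 2 * c₁ ^ 3 * c₂ ^ 4 + 6 * y ^ 3 * a₁ ^ 2 * a₃ ^ 3 * b₁ ^ 2 * b₂ ^ 2 * b₃ ^ 2 * c₁ ^ 3 * c₂ ^ 4 - 2 * y ^ 3 * a₁ ^ 3 * a₂ * a₃ * b₁ * b₂ * b₃ ^ 4 * c₁ ^ 3 * c₂ ^ 4 + 2 * y ^ 3 * a₁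 * a₂ ^ 2 * a₃ ^ 2 * b₁ ^ 3 * b₂ ^ 2 * b₃ * c₁ ^ 2 * c₂ ^ 5 - y ^ 3 * a₁ ^ 3 * a₃ ^ 2 * b₂ ^ 3 * b₃ ^ 3 * c₁ ^ 2 * c₂ ^ 5 - 2 * y ^ 3 * a₁ ^ 2 * a₂ ^ 2 * a₃ * b₁ * b₂ ^ 3 * b₃ ^ 2 * c₁ * c₂ ^ 6 - y ^ 3 * a₁ ^ 2 * a₂ * a₃ ^ 2 * b₂ ^ 5 * b₃ * c₂ ^ 7 - 2 * x ^ 2 * a₁ * a₂ ^ 2 * a₃ ^ 2 * b₁ ^ 5 * b₃ * c₁ ^ 5 * c₂ ^ 2 - x ^ 2 * a₁ ^ 4 * a₂ * b₁ * b₃ ^ 5 * c₁ ^ 5 * c₂ ^ 2 + x ^ 2 * a₂ ^ 4 * a₃ * b₁ ^ 6 * c₁ ^ 4 * c₂ ^ 3 + x ^ 2 * a₁ * a₂ * a₃ ^ 3 * b₁ ^ 4 * b₂ ^ 2 * c₁ ^ 4 * c₂ ^ 3 + 5 * x ^ 2 * a₁ ^ 2 * a₂ ^ 2 * a₃ * b₁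 ^ 3 * b₂ * b₃ ^ 2 * c₁ ^ 4 * c₂ ^ 3 - x ^ 2 * a₁ * a₂ ^ 4 * b₁ ^ 4 * b₂ * b₃ * c₁ ^ 3 * c₂ ^ 4 - 3 * x ^ 2 * a₁ ^ 2 * a₂ * a₃ ^ 2 * b₁ ^ 2 * b₂ ^ 3 * b₃ * c₁ ^ 3 * c₂ ^ 4 - 2 * x ^ 2 * a₁ * a₂ ^ 3 * a₃ * b₁ ^ 3 * b₂ ^ 3 * c₁ ^ 2 * c₂ ^ 5 + x ^ 2 * a₁ ^ 3 * a₂ * a₃ * b₂ ^ 4 * b₃ ^ 2 * c₁ ^ 2 * c₂ ^ 5 + x ^ 2 * a₁ ^ 2 * a₂ ^ 3 * b₁ * b₂ ^ 4 * b₃ * c₁ * c₂ ^ 6 - x * y * a₁ * a₂ * a₃ ^ 3 * b₁ ^ 5 * b₃ * c₁ ^ 5 * c₂ ^ 2 - x * y * a₁ ^ 4 * a₃ * b₁ * b₃ ^ 5 * c₁ ^ 5 * c₂ ^ 2 + x * y * a₁ * a₃ ^ 4 * b₁ ^ 4 * b₂ ^ 2 * c₁ ^ 4 * c₂ ^ 3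 + x * y * a₁ ^ 2 * a₂ * a₃ ^ 2 * b₁ ^ 3 * b₂ * b₃ ^ 2 * c₁ ^ 4 * c₂ ^ 3 + x * y * a₁ ^ 3 * a₂ ^ 2 * b₁ ^ 2 * b₃ ^ 4 * c₁ ^ 4 * c₂ ^ 3 + x * y * a₁ * a₂ ^ 3 * a₃ * b₁ ^ 4 * b₂ * b₃ * c₁ ^ 3 * c₂ ^ 4 - 3 * x * y * a₁ ^ 2 * a₃ ^ 3 * b₁ ^ 2 * b₂ ^ 3 * b₃ * c₁ ^ 3 * c₂ ^ 4 + 3 * x * y * a₁ ^ 3 * a₂ * a₃ * b₁ * b₂ ^ 2 * b₃ ^ 3 * c₁ ^ 3 * c₂ ^ 4 - 3 * x * y * a₁ ^ 2 * a₂ ^ 3 * b₁ ^ 2 * b₂ ^ 2 * b₃ ^ 2 * c₁ ^ 2 * c₂ ^ 5 + x * y * a₁ ^ 3 * a₃ ^ 2 * b₂ ^ 4 * b₃ ^ 2 * c₁ ^ 2 * c₂ ^ 5 + y ^ 2 * a₁ * a₃ ^ 4 * b₁ ^ 5 * b₃ * c₁ ^ 5 * c₂ ^ 2 - y ^ 2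 * a₂ ^ 2 * a₃ ^ 3 * b₁ ^ 6 * c₁ ^ 4 * c₂ ^ 3 - 4 * y ^ 2 * a₁ ^ 2 * a₃ ^ 3 * b₁ ^ 3 * b₂ * b₃ ^ 2 * c₁ ^ 4 * c₂ ^ 3 + y ^ 2 * a₁ ^ 3 * a₂ * a₃ * b₁ ^ 2 * b₃ ^ 4 * c₁ ^ 4 * c₂ ^ 3 + 2 * y ^ 2 * a₁ * a₂ ^ 2 * a₃ ^ 2 * b₁ ^ 4 * b₂ * b₃ * c₁ ^ 3 * c₂ ^ 4 + 3 * y ^ 2 * a₁ ^ 3 * a₃ ^ 2 * b₁ * b₂ ^ 2 * b₃ ^ 3 * c₁ ^ 3 * c₂ ^ 4 + 2 * y ^ 2 * a₁ * a₂ * a₃ ^ 3 * b₁ ^ 3 * b₂ ^ 3 * c₁ ^ 2 * c₂ ^ 5 - 3 * y ^ 2 * a₁ ^ 2 * a₂ ^ 2 * a₃ * b₁ ^ 2 * b₂ ^ 2 * b₃ ^ 2 * c₁ ^ 2 * c₂ ^ 5 - y ^ 2 * a₁ ^ 2 * a₂ * a₃ ^ 2 * b₁ * b₂ ^ 4 *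 b₃ * c₁ * c₂ ^ 6 - y ^ 2 * a₁ ^ 2 * a₃ ^ 3 * b₂ ^ 6 * c₂ ^ 7 + x * a₁ * a₃ ^ 4 * b₁ ^ 5 * b₂ * c₁ ^ 5 * c₂ ^ 2 - 2 * x * a₁ ^ 2 * a₂ * a₃ ^ 2 * b₁ ^ 4 * b₃ ^ 2 * c₁ ^ 5 * c₂ ^ 2 - x * a₁ ^ 5 * b₃ ^ 6 * c₁ ^ 5 * c₂ ^ 2 + x * a₁ * a₂ ^ 3 * a₃ * b₁ ^ 5 * b₃ * c₁ ^ 4 * c₂ ^ 3 - 4 * x * a₁ ^ 2 * a₃ ^ 3 * b₁ ^ 3 * b₂ ^ 2 * b₃ * c₁ ^ 4 * c₂ ^ 3 + 7 * x * a₁ ^ 3 * a₂ * a₃ * b₁ ^ 2 * b₂ * b₃ ^ 3 * c₁ ^ 4 * c₂ ^ 3 - 2 * x * a₁ ^ 2 * a₂ ^ 3 * b₁ ^ 3 * b₂ * b₃ ^ 2 * c₁ ^ 3 * c₂ ^ 4 + 3 * x * a₁ ^ 3 * a₃ ^ 2 * b₁ * b₂ ^ 3 * b₃ ^ 2 * c₁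 ^ 3 * c₂ ^ 4 - 2 * x * a₁ ^ 4 * a₂ * b₂ ^ 2 * b₃ ^ 4 * c₁ ^ 3 * c₂ ^ 4 - x * a₁ ^ 3 * a₂ ^ 2 * b₂ ^ 4 * b₃ ^ 2 * c₁ * c₂ ^ 6 + y * a₁ ^ 2 * a₃ ^ 3 * b₁ ^ 4 * b₃ ^ 2 * c₁ ^ 5 * c₂ ^ 2 - 3 * y * a₁ * a₂ ^ 2 * a₃ ^ 2 * b₁ ^ 5 * b₃ * c₁ ^ 4 * c₂ ^ 3 - 3 * y * a₁ ^ 3 * a₃ ^ 2 * b₁ ^ 2 * b₂ * b₃ ^ 3 * c₁ ^ 4 * c₂ ^ 3 + y * a₂ ^ 4 * a₃ * b₁ ^ 6 * c₁ ^ 3 * c₂ ^ 4 + 2 * y * a₁ * a₂ * a₃ ^ 3 * b₁ ^ 4 * b₂ ^ 2 * c₁ ^ 3 * c₂ ^ 4 + 4 * y * a₁ ^ 2 * a₂ ^ 2 * a₃ * b₁ ^ 3 * b₂ * b₃ ^ 2 * c₁ ^ 3 * c₂ ^ 4 + y * a₁ ^ 4 * a₃ * b₂ ^ 2 * b₃ ^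 4 * c₁ ^ 3 * c₂ ^ 4 - 2 * y * a₁ ^ 2 * a₂ * a₃ ^ 2 * b₁ ^ 2 * b₂ ^ 3 * b₃ * c₁ ^ 2 * c₂ ^ 5 - 2 * y * a₁ * a₂ ^ 3 * a₃ * b₁ ^ 3 * b₂ ^ 3 * c₁ * c₂ ^ 6 - y * a₁ ^ 2 * a₃ ^ 3 * b₁ * b₂ ^ 5 * c₁ * c₂ ^ 6 + 2 * y * a₁ ^ 3 * a₂ * a₃ * b₂ ^ 4 * b₃ ^ 2 * c₁ * c₂ ^ 6 + a₁ ^ 3 * a₃ ^ 2 * b₁ ^ 3 * b₃ ^ 3 * c₁ ^ 5 * c₂ ^ 2 + a₁ * a₂ * a₃ ^ 3 * b₁ ^ 5 * b₂ * c₁ ^ 4 * c₂ ^ 3 - 3 * a₁ ^ 2 * a₂ ^ 2 * a₃ * b₁ ^ 4 * b₃ ^ 2 * c₁ ^ 4 * c₂ ^ 3 - 2 * a₁ ^ 4 * a₃ * b₁ * b₂ * b₃ ^ 4 * c₁ ^ 4 * c₂ ^ 3 + a₁ * a₂ ^ 4 * b₁ ^ 5 * b₃ * c₁ ^ 3 *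 c₂ ^ 4 - a₁ ^ 2 * a₂ * a₃ ^ 2 * b₁ ^ 3 * b₂ ^ 2 * b₃ * c₁ ^ 3 * c₂ ^ 4 + 3 * a₁ ^ 3 * a₂ ^ 2 * b₁ ^ 2 * b₂ * b₃ ^ 3 * c₁ ^ 3 * c₂ ^ 4 - a₁ ^ 2 * a₃ ^ 3 * b₁ ^ 2 * b₂ ^ 4 * c₁ ^ 2 * c₂ ^ 5 + 2 * a₁ ^ 3 * a₂ * a₃ * b₁ * b₂ ^ 3 * b₃ ^ 2 * c₁ ^ 2 * c₂ ^ 5 - a₁ ^ 2 * a₂ ^ 3 * b₁ ^ 2 * b₂ ^ 3 * b₃ * c₁ * c₂ ^ 6 + a₁ ^ 3 * a₃ ^ 2 * b₂ ^ 5 * b₃ * c₁ * c₂ ^ 6) * h2 +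
      (x ^ 2 * y * a₃ ^ 5 * b₁ ^ 7 * c₁ ^ 6 - 7 * x ^ 2 * y * a₁ * a₃ ^ 4 * b₁ ^ 5 * b₂ * b₃ * c₁ ^ 5 * c₂ + 5 * x ^ 2 * y * a₁ ^ 2 * a₂ * a₃ ^ 2 * b₁ ^ 4 * b₃ ^ 3 * c₁ ^ 5 * c₂ + x ^ 2 * y * a₁ ^ 5 * b₃ ^ 7 * c₁ ^ 5 * c₂ + 2 * x ^ 2 * y * a₂ ^ 2 * a₃ ^ 3 * b₁ ^ 6 * b₂ * c₁ ^ 4 * c₂ ^ 2 - 5 * x ^ 2 * y * a₁ * a₂ ^ 3 * a₃ * b₁ ^ 5 * b₃ ^ 2 * c₁ ^ 4 * c₂ ^ 2 + 14 * x ^ 2 * y * a₁ ^ 2 * a₃ ^ 3 * b₁ ^ 3 * b₂ ^ 2 * b₃ ^ 2 * c₁ ^ 4 * c₂ ^ 2 - 12 * x ^ 2 * y * a₁ ^ 3 * a₂ * a₃ * b₁ ^ 2 * b₂ * b₃ ^ 4 * c₁ ^ 4 * c₂ ^ 2 + x ^ 2 * y * a₂ ^ 5 * b₁ ^ 6 *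 b₃ * c₁ ^ 3 * c₂ ^ 3 - x ^ 2 * y * a₁ * a₂ ^ 2 * a₃ ^ 2 * b₁ ^ 4 * b₂ ^ 2 * b₃ * c₁ ^ 3 * c₂ ^ 3 + 5 * x ^ 2 * y * a₁ ^ 2 * a₂ ^ 3 * b₁ ^ 3 * b₂ * b₃ ^ 3 * c₁ ^ 3 * c₂ ^ 3 - 7 * x ^ 2 * y * a₁ ^ 3 * a₃ ^ 2 * b₁ * b₂ ^ 3 * b₃ ^ 3 * c₁ ^ 3 * c₂ ^ 3 + 2 * x ^ 2 * y * a₁ ^ 4 * a₂ * b₂ ^ 2 * b₃ ^ 5 * c₁ ^ 3 * c₂ ^ 3 - 3 * x ^ 2 * y * a₁ * a₂ * a₃ ^ 3 * b₁ ^ 3 * b₂ ^ 4 * c₁ ^ 2 * c₂ ^ 4 + 3 * x ^ 2 * y * a₁ ^ 2 * a₂ ^ 2 * a₃ * b₁ ^ 2 * b₂ ^ 3 * b₃ ^ 2 * c₁ ^ 2 * c₂ ^ 4 - x ^ 2 * y * a₁ * a₂ ^ 4 * b₁ ^ 3 * b₂ ^ 3 * b₃ * c₁ * c₂ ^ 5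 + x ^ 2 * y * a₁ ^ 2 * a₂ * a₃ ^ 2 * b₁ * b₂ ^ 5 * b₃ * c₁ * c₂ ^ 5 + x ^ 2 * y * a₁ ^ 3 * a₂ ^ 2 * b₂ ^ 4 * b₃ ^ 3 * c₁ * c₂ ^ 5 + x ^ 2 * y * a₁ ^ 2 * a₃ ^ 3 * b₂ ^ 7 * c₂ ^ 6 + x * y ^ 2 * a₂ * a₃ ^ 4 * b₁ ^ 6 * b₂ * c₁ ^ 4 * c₂ ^ 2 + x * y ^ 2 * a₁ ^ 3 * a₃ ^ 2 * b₁ ^ 2 * b₂ * b₃ ^ 4 * c₁ ^ 4 * c₂ ^ 2 - 3 * x * y ^ 2 * a₁ * a₂ * a₃ ^ 3 * b₁ ^ 4 * b₂ ^ 2 * b₃ * c₁ ^ 3 * c₂ ^ 3 - x * y ^ 2 * a₁ ^ 2 * a₂ ^ 2 * a₃ * b₁ ^ 3 * b₂ * b₃ ^ 3 * c₁ ^ 3 * c₂ ^ 3 - x * y ^ 2 * a₁ ^ 4 * a₃ * b₂ ^ 2 * b₃ ^ 5 * c₁ ^ 3 * c₂ ^ 3 - x * y ^ 2 * a₁ *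 a₃ ^ 4 * b₁ ^ 3 * b₂ ^ 4 * c₁ ^ 2 * c₂ ^ 4 + 4 * x * y ^ 2 * a₁ ^ 2 * a₂ * a₃ ^ 2 * b₁ ^ 2 * b₂ ^ 3 * b₃ ^ 2 * c₁ ^ 2 * c₂ ^ 4 + x * y ^ 2 * a₁ * a₂ ^ 3 * a₃ * b₁ ^ 3 * b₂ ^ 3 * b₃ * c₁ * c₂ ^ 5 + 2 * x * y ^ 2 * a₁ ^ 2 * a₃ ^ 3 * b₁ * b₂ ^ 5 * b₃ * c₁ * c₂ ^ 5 - 2 * x * y ^ 2 * a₁ ^ 3 * a₂ * a₃ * b₂ ^ 4 * b₃ ^ 3 * c₁ * c₂ ^ 5 + 2 * x ^ 2 * a₁ * a₂ ^ 2 * a₃ ^ 2 * b₁ ^ 5 * b₂ * b₃ * c₁ ^ 4 * c₂ ^ 2 + x ^ 2 * a₁ ^ 4 * a₂ * b₁ * b₂ * b₃ ^ 5 * c₁ ^ 4 * c₂ ^ 2 - x ^ 2 * a₂ ^ 4 * a₃ * b₁ ^ 6 * b₂ * c₁ ^ 3 * c₂ ^ 3 - x ^ 2 * a₁ * a₂ *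 a₃ ^ 3 * b₁ ^ 4 * b₂ ^ 3 * c₁ ^ 3 * c₂ ^ 3 - 5 * x ^ 2 * a₁ ^ 2 * a₂ ^ 2 * a₃ * b₁ ^ 3 * b₂ ^ 2 * b₃ ^ 2 * c₁ ^ 3 * c₂ ^ 3 + x ^ 2 * a₁ * a₂ ^ 4 * b₁ ^ 4 * b₂ ^ 2 * b₃ * c₁ ^ 2 * c₂ ^ 4 + 3 * x ^ 2 * a₁ ^ 2 * a₂ * a₃ ^ 2 * b₁ ^ 2 * b₂ ^ 4 * b₃ * c₁ ^ 2 * c₂ ^ 4 + 2 * x ^ 2 * a₁ * a₂ ^ 3 * a₃ * b₁ ^ 3 * b₂ ^ 4 * c₁ * c₂ ^ 5 - x ^ 2 * a₁ ^ 3 * a₂ * a₃ * b₂ ^ 5 * b₃ ^ 2 * c₁ * c₂ ^ 5 - x ^ 2 * a₁ ^ 2 * a₂ ^ 3 * b₁ * b₂ ^ 5 * b₃ * c₂ ^ 6 + x * y * a₁ * a₂ * a₃ ^ 3 * b₁ ^ 5 * b₂ * b₃ * c₁ ^ 4 * c₂ ^ 2 + x * y * a₁ ^ 4 * a₃ * b₁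 * b₂ * b₃ ^ 5 * c₁ ^ 4 * c₂ ^ 2 - x * y * a₁ * a₃ ^ 4 * b₁ ^ 4 * b₂ ^ 3 * c₁ ^ 3 * c₂ ^ 3 - x * y * a₁ ^ 2 * a₂ * a₃ ^ 2 * b₁ ^ 3 * b₂ ^ 2 * b₃ ^ 2 * c₁ ^ 3 * c₂ ^ 3 - x * y * a₁ ^ 3 * a₂ ^ 2 * b₁ ^ 2 * b₂ * b₃ ^ 4 * c₁ ^ 3 * c₂ ^ 3 - x * y * a₁ * a₂ ^ 3 * a₃ * b₁ ^ 4 * b₂ ^ 2 * b₃ * c₁ ^ 2 * c₂ ^ 4 + 3 * x * y * a₁ ^ 2 * a₃ ^ 3 * b₁ ^ 2 * b₂ ^ 4 * b₃ * c₁ ^ 2 * c₂ ^ 4 - 3 * x * y * a₁ ^ 3 * a₂ * a₃ * b₁ * b₂ ^ 3 * b₃ ^ 3 * c₁ ^ 2 * c₂ ^ 4 + 3 * x * y * a₁ ^ 2 * a₂ ^ 3 * b₁ ^ 2 * b₂ ^ 3 * b₃ ^ 2 * c₁ * c₂ ^ 5 - x * y * a₁ ^ 3 * a₃ ^ 2 *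 b₂ ^ 5 * b₃ ^ 2 * c₁ * c₂ ^ 5 - y ^ 2 * a₃ ^ 5 * b₁ ^ 7 * c₁ ^ 5 * c₂ + 5 * y ^ 2 * a₁ * a₃ ^ 4 * b₁ ^ 5 * b₂ * b₃ * c₁ ^ 4 * c₂ ^ 2 - 2 * y ^ 2 * a₁ ^ 2 * a₂ * a₃ ^ 2 * b₁ ^ 4 * b₃ ^ 3 * c₁ ^ 4 * c₂ ^ 2 + y ^ 2 * a₁ * a₂ ^ 3 * a₃ * b₁ ^ 5 * b₃ ^ 2 * c₁ ^ 3 * c₂ ^ 3 - 6 * y ^ 2 * a₁ ^ 2 * a₃ ^ 3 * b₁ ^ 3 * b₂ ^ 2 * b₃ ^ 2 * c₁ ^ 3 * c₂ ^ 3 + 2 * y ^ 2 * a₁ ^ 3 * a₂ * a₃ * b₁ ^ 2 * b₂ * b₃ ^ 4 * c₁ ^ 3 * c₂ ^ 3 - 2 * y ^ 2 * a₁ * a₂ ^ 2 * a₃ ^ 2 * b₁ ^ 4 * b₂ ^ 2 * b₃ * c₁ ^ 2 * c₂ ^ 4 + y ^ 2 * a₁ ^ 3 * a₃ ^ 2 *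 b₁ * b₂ ^ 3 * b₃ ^ 3 * c₁ ^ 2 * c₂ ^ 4 + 2 * y ^ 2 * a₁ ^ 2 * a₂ ^ 2 * a₃ * b₁ ^ 2 * b₂ ^ 3 * b₃ ^ 2 * c₁ * c₂ ^ 5 + y ^ 2 * a₁ ^ 2 * a₂ * a₃ ^ 2 * b₁ * b₂ ^ 5 * b₃ * c₂ ^ 6 - x * a₁ * a₃ ^ 4 * b₁ ^ 5 * b₂ ^ 2 * c₁ ^ 4 * c₂ ^ 2 + 2 * x * a₁ ^ 2 * a₂ * a₃ ^ 2 * b₁ ^ 4 * b₂ * b₃ ^ 2 * c₁ ^ 4 * c₂ ^ 2 + x * a₁ ^ 5 * b₂ * b₃ ^ 6 * c₁ ^ 4 * c₂ ^ 2 - x * a₁ * a₂ ^ 3 * a₃ * b₁ ^ 5 * b₂ * b₃ * c₁ ^ 3 * c₂ ^ 3 + 4 * x * a₁ ^ 2 * a₃ ^ 3 * b₁ ^ 3 * b₂ ^ 3 * b₃ * c₁ ^ 3 * c₂ ^ 3 - 7 * x * a₁ ^ 3 * a₂ * a₃ * b₁ ^ 2 * b₂ ^ 2 * b₃ ^ 3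 * c₁ ^ 3 * c₂ ^ 3 + 2 * x * a₁ ^ 2 * a₂ ^ 3 * b₁ ^ 3 * b₂ ^ 2 * b₃ ^ 2 * c₁ ^ 2 * c₂ ^ 4 - 3 * x * a₁ ^ 3 * a₃ ^ 2 * b₁ * b₂ ^ 4 * b₃ ^ 2 * c₁ ^ 2 * c₂ ^ 4 + 2 * x * a₁ ^ 4 * a₂ * b₂ ^ 3 * b₃ ^ 4 * c₁ ^ 2 * c₂ ^ 4 + x * a₁ ^ 3 * a₂ ^ 2 * b₂ ^ 5 * b₃ ^ 2 * c₂ ^ 6 + y * a₂ ^ 2 * a₃ ^ 3 * b₁ ^ 7 * c₁ ^ 4 * c₂ ^ 2 - y * a₁ ^ 2 * a₃ ^ 3 * b₁ ^ 4 * b₂ * b₃ ^ 2 * c₁ ^ 4 * c₂ ^ 2 + y * a₁ ^ 3 * a₂ * a₃ * b₁ ^ 3 * b₃ ^ 4 * c₁ ^ 4 * c₂ ^ 2 - 2 * y * a₁ * a₂ ^ 2 * a₃ ^ 2 * b₁ ^ 5 * b₂ * b₃ * c₁ ^ 3 * c₂ ^ 3 - y * a₁ ^ 2 * a₂ ^ 3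 * b₁ ^ 4 * b₃ ^ 3 * c₁ ^ 3 * c₂ ^ 3 + 3 * y * a₁ ^ 3 * a₃ ^ 2 * b₁ ^ 2 * b₂ ^ 2 * b₃ ^ 3 * c₁ ^ 3 * c₂ ^ 3 - 2 * y * a₁ ^ 4 * a₂ * b₁ * b₂ * b₃ ^ 5 * c₁ ^ 3 * c₂ ^ 3 - 2 * y * a₁ * a₂ * a₃ ^ 3 * b₁ ^ 4 * b₂ ^ 3 * c₁ ^ 2 * c₂ ^ 4 + 5 * y * a₁ ^ 2 * a₂ ^ 2 * a₃ * b₁ ^ 3 * b₂ ^ 2 * b₃ ^ 2 * c₁ ^ 2 * c₂ ^ 4 - y * a₁ ^ 4 * a₃ * b₂ ^ 3 * b₃ ^ 4 * c₁ ^ 2 * c₂ ^ 4 + y * a₁ ^ 2 * a₂ * a₃ ^ 2 * b₁ ^ 2 * b₂ ^ 4 * b₃ * c₁ * c₂ ^ 5 - 2 * y * a₁ ^ 3 * a₂ ^ 2 * b₁ * b₂ ^ 3 * b₃ ^ 3 * c₁ * c₂ ^ 5 + y * a₁ ^ 2 * a₃ ^ 3 * b₁ * b₂ ^ 6 * c₂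 ^ 6 - y * a₁ ^ 3 * a₂ * a₃ * b₂ ^ 5 * b₃ ^ 2 * c₂ ^ 6 + 2 * a₁ * a₂ ^ 2 * a₃ ^ 2 * b₁ ^ 6 * b₃ * c₁ ^ 4 * c₂ ^ 2 - a₁ ^ 3 * a₃ ^ 2 * b₁ ^ 3 * b₂ * b₃ ^ 3 * c₁ ^ 4 * c₂ ^ 2 + a₁ ^ 4 * a₂ * b₁ ^ 2 * b₃ ^ 5 * c₁ ^ 4 * c₂ ^ 2 - a₂ ^ 4 * a₃ * b₁ ^ 7 * c₁ ^ 3 * c₂ ^ 3 - 2 * a₁ * a₂ * a₃ ^ 3 * b₁ ^ 5 * b₂ ^ 2 * c₁ ^ 3 * c₂ ^ 3 - 2 * a₁ ^ 2 * a₂ ^ 2 * a₃ * b₁ ^ 4 * b₂ * b₃ ^ 2 * c₁ ^ 3 * c₂ ^ 3 + 2 * a₁ ^ 4 * a₃ * b₁ * b₂ ^ 2 * b₃ ^ 4 * c₁ ^ 3 * c₂ ^ 3 + 4 * a₁ ^ 2 * a₂ * a₃ ^ 2 * b₁ ^ 3 * b₂ ^ 3 * b₃ * c₁ ^ 2 *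 c₂ ^ 4 - 3 * a₁ ^ 3 * a₂ ^ 2 * b₁ ^ 2 * b₂ ^ 2 * b₃ ^ 3 * c₁ ^ 2 * c₂ ^ 4 + 2 * a₁ * a₂ ^ 3 * a₃ * b₁ ^ 4 * b₂ ^ 3 * c₁ * c₂ ^ 5 + a₁ ^ 2 * a₃ ^ 3 * b₁ ^ 2 * b₂ ^ 5 * c₁ * c₂ ^ 5 - 3 * a₁ ^ 3 * a₂ * a₃ * b₁ * b₂ ^ 4 * b₃ ^ 2 * c₁ * c₂ ^ 5 - a₁ ^ 3 * a₃ ^ 2 * b₂ ^ 6 * b₃ * c₂ ^ 6) * hg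
  exact (mul_eq_zero.mp key).resolve_left hxy
end

section
/- Let 0 → R^a →(φ) R^b →(ψ) R^c → 0 be a three-term complex of free modules over an integral domain R with a + c = b, such that the localization at the field of fractions is exact. Fix a splitting R^b = R^a ⊕ R^c compatible with generic exactness (i.e. the corresponding square blocks φ_1 of φ and ψ_2 of ψ have nonzero determinant). Then the determinant of the complex, defined as det(ψ_2)/det(φ-complement) via the standard formula det(complex) = det(square submatrix of ψ on the chosen c columns) · det(square submatrix of φ on the complementary a rows)^{(−1)}, is independent (up to sign and units) of the choice of splitting. -/
open Matrix

namespace CxAux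

variable {R : Type*} [CommRing R] {a c : ℕ}

/-- The square matrix whose first `a` columns are `φ` and whose last `c` columns are
the standard basis vectors at positions `e`. -/
def bigMat (φ : Matrix (Fin (a + c)) (Fin a) R) (e : Fin c ↪ Fin (a + c)) :
    Matrix (Fin (a + c)) (Fin (a + c)) R :=
  Matrix.of fun i j =>
    Sum.elim (fun j' => φ i j') (fun k => if i = e k then 1 else 0) (finSumFinEquiv.symm j)

/-- A `c × (a+c)` matrix which is zero on the first block of columns and `W` on the last. -/
def zmat (W : Matrix (Fin c) (Fin c) R) : Matrix (Fin c) (Fin (a + c)) R :=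
  Matrix.of fun i j => Sum.elim (fun _ => (0 : R)) (fun k => W i k) (finSumFinEquiv.symm j)

noncomputable def splitEquiv (e : Fin c ↪ Fin (a + c)) (f : Fin a ↪ Fin (a + c))
    (hef : ∀ i j, e i ≠ f j) : (Fin a ⊕ Fin c) ≃ Fin (a + c) :=
  Equiv.ofBijective (Sum.elim f e) <| by
    rw [Fintype.bijective_iff_injective_and_card]
    refine ⟨?_, by simp⟩
    rintro (i | i) (j | j) h
    · exact congrArg Sum.inl (f.injective h)
    · exact absurd h.symm (hef j i)
    · exact absurd h (hef i j)
    · exact congrArg Sum.inr (e.injective h)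

lemma det_bigMat (φ : Matrix (Fin (a + c)) (Fin a) R) (e : Fin c ↪ Fin (a + c))
    (f : Fin a ↪ Fin (a + c)) (hef : ∀ i j, e i ≠ f j) :
    ∃ ε : ℤˣ, (bigMat φ e).det = ((ε : ℤ) : R) * (φ.submatrix f id).det := by
  classical
  set σ := splitEquiv e f hef with hσ
  set τ : Equiv.Perm (Fin a ⊕ Fin c) := σ.trans finSumFinEquiv.symm with hτ
  refine ⟨Equiv.Perm.sign τ, ?_⟩
  have h3 : (bigMat φ e).submatrix ⇑σ ⇑finSumFinEquiv
      = fromBlocks (φ.submatrix f id) 0 (φ.submatrix e id) 1 := by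
    ext i j
    rcases i with i | i <;> rcases j with j | j <;>
      simp only [submatrix_apply, bigMat, Matrix.of_apply, Equiv.symm_apply_apply,
        Sum.elim_inl, Sum.elim_inr, fromBlocks_apply₁₁, fromBlocks_apply₁₂,
        fromBlocks_apply₂₁, fromBlocks_apply₂₂, hσ, splitEquiv, Equiv.ofBijective_apply,
        Matrix.zero_apply, id]
    · rw [if_neg]
      exact fun h => hef j i h.symm
    · rw [Matrix.one_apply]
      simp [e.injective.eq_iff]
  have h2 : (bigMat φ e).submatrix ⇑σ ⇑σ
      = ((bigMat φ e).submatrix ⇑σ ⇑finSumFinEquiv).submatrix id ⇑τ := by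
    rw [submatrix_submatrix]
    ext i j
    simp [hτ]
  have h1 : (bigMat φ e).det = ((bigMat φ e).submatrix ⇑σ ⇑σ).det :=
    (det_submatrix_equiv_self σ _).symm
  rw [h1, h2, det_permute' τ, h3, det_fromBlocks_zero₁₂, det_one, mul_one]

lemma mul_bigMat (ψ : Matrix (Fin c) (Fin (a + c)) R) (φ : Matrix (Fin (a + c)) (Fin a) R)
    (e : Fin c ↪ Fin (a + c)) (h : ψ * φ = 0) :
    ψ * bigMat φ e = zmat (ψ.submatrix id e) := by
  ext i j
  rcases hj : finSumFinEquiv.symm j with j' | j' <;>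
    [(have hj2 : j = finSumFinEquiv (Sum.inl j') := by rw [← hj]; simp);
     (have hj2 : j = finSumFinEquiv (Sum.inr j') := by rw [← hj]; simp)] <;>
    subst hj2 <;>
    simp only [mul_apply, bigMat, zmat, Matrix.of_apply, Equiv.symm_apply_apply,
      Sum.elim_inl, Sum.elim_inr, submatrix_apply, id]
  · have h0 := congrFun (congrFun h i) j'
    simpa [mul_apply] using h0
  · simp [mul_ite]

end CxAux

open CxAux in
/-- Let `0 → R^a →(φ) R^{a+c} →(ψ) R^c → 0` be a three-term complex of free
modules over an integral domain `R` which becomes exact after localizing at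
the field of fractions. A splitting of `R^{a+c}` compatible with generic
exactness is a pair of injections `e : Fin c ↪ Fin (a+c)` (columns of `ψ`) and
`f : Fin a ↪ Fin (a+c)` (rows of `φ`) with complementary images such that the
square blocks `ψ_e` (of `ψ` on the columns `e`) and `φ_f` (of `φ` on the rows
`f`) have nonzero determinant. The determinant of the complex
`det(ψ_e) · det(φ_f)⁻¹` is independent of the choice of splitting, up to sign
and units of `R`: for two such splittings,
`det(ψ_{e}) · det(φ_{f'}) = u · det(ψ_{e'}) · det(φ_{f})` for a unit `u ∈ Rˣ`
(units of `R` include `−1`, accounting for the sign). -/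
theorem determinant_of_complex_independent_of_splitting
    {R : Type} [CommRing R] [IsDomain R] (a c : ℕ)
    (φ : Matrix (Fin (a + c)) (Fin a) R) (ψ : Matrix (Fin c) (Fin (a + c)) R)
    (hcx : ψ * φ = 0)
    (hexact :
      Function.Injective (φ.map (algebraMap R (FractionRing R))).mulVecLin ∧
      Function.Surjective (ψ.map (algebraMap R (FractionRing R))).mulVecLin ∧
      Function.Exact (φ.map (algebraMap R (FractionRing R))).mulVecLin
        (ψ.map (algebraMap R (FractionRing R))).mulVecLin)
    (e e' : Fin c ↪ Fin (a + c)) (f f' : Fin a ↪ Fin (a + c))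
    (hef : ∀ i j, e i ≠ f j) (hef' : ∀ i j, e' i ≠ f' j)
    (hψe : (ψ.submatrix id e).det ≠ 0) (hφf : (φ.submatrix f id).det ≠ 0)
    (hψe' : (ψ.submatrix id e').det ≠ 0) (hφf' : (φ.submatrix f' id).det ≠ 0) :
    ∃ u : Rˣ,
      (ψ.submatrix id e).det * (φ.submatrix f' id).det =
        (u : R) * ((ψ.submatrix id e').det * (φ.submatrix f id).det) := by
  classical
  clear hexact
  set K := FractionRing R
  set alg := algebraMap R K with halg'
  have halg : Function.Injective alg := IsFractionRing.injective R K
  set A : Matrix (Fin (a + c)) (Fin a) K := φ.map alg with hA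
  set Ψ : Matrix (Fin c) (Fin (a + c)) K := ψ.map alg with hΨ
  have hΨA : Ψ * A = 0 := by
    rw [hΨ, hA, ← Matrix.map_mul, hcx]
    ext i j; simp
  -- determinants of mapped submatrices
  have detmapφ : ∀ g : Fin a ↪ Fin (a + c),
      (A.submatrix g id).det = alg (φ.submatrix g id).det := by
    intro g
    rw [RingHom.map_det]
    congr 1
  have detmapψ : ∀ g : Fin c ↪ Fin (a + c),
      (Ψ.submatrix id g).det = alg (ψ.submatrix id g).det := by
    intro g
    rw [RingHom.map_det]
    congr 1
  set M : Matrix (Fin (a + c)) (Fin (a + c)) K := bigMat A e with hM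
  set M' : Matrix (Fin (a + c)) (Fin (a + c)) K := bigMat A e' with hM'
  obtain ⟨ε, hdM⟩ := det_bigMat A e f hef
  obtain ⟨ε', hdM'⟩ := det_bigMat A e' f' hef'
  have hεunit : ∀ δ : ℤˣ, ((δ : ℤ) : K) ≠ 0 := by
    intro δ; rcases Int.units_eq_one_or δ with h | h <;> simp [h]
  have hMne : M.det ≠ 0 := by
    rw [← hM] at hdM
    rw [hdM]
    refine mul_ne_zero (hεunit ε) ?_
    rw [detmapφ]
    exact fun h => hφf (halg (by simpa using h))
  have hM'ne : M'.det ≠ 0 := by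
    rw [← hM'] at hdM'
    rw [hdM']
    refine mul_ne_zero (hεunit ε') ?_
    rw [detmapφ]
    exact fun h => hφf' (halg (by simpa using h))
  have hMunit : IsUnit M.det := isUnit_iff_ne_zero.mpr hMne
  set S : Matrix (Fin (a + c)) (Fin (a + c)) K := M⁻¹ * M' with hS
  -- key products
  have key1 : Ψ * M = zmat (a := a) (Ψ.submatrix id e) := mul_bigMat Ψ A e hΨA
  have key2 : Ψ * M' = zmat (a := a) (Ψ.submatrix id e') := mul_bigMat Ψ A e' hΨA
  have key3 : zmat (a := a) (Ψ.submatrix id e') = zmat (a := a) (Ψ.submatrix id e) * S := by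
    rw [← key1, ← key2, hS, ← Matrix.mul_assoc, Matrix.mul_assoc Ψ M M⁻¹,
      Matrix.mul_nonsing_inv M hMunit, Matrix.mul_one]
  -- the left block of columns of S is that of the identity matrix
  have hScol : ∀ (x : Fin (a + c)) (j : Fin a),
      S x (finSumFinEquiv (Sum.inl j)) = (1 : Matrix (Fin (a + c)) (Fin (a + c)) K) x
        (finSumFinEquiv (Sum.inl j)) := by
    intro x j
    have hcol : ∀ k, M' k (finSumFinEquiv (Sum.inl j)) = M k (finSumFinEquiv (Sum.inl j)) := by
      intro k; simp [hM, hM', bigMat]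
    have : S x (finSumFinEquiv (Sum.inl j)) = (M⁻¹ * M) x (finSumFinEquiv (Sum.inl j)) := by
      simp only [hS, mul_apply]
      exact Finset.sum_congr rfl fun k _ => by rw [hcol]
    rw [this, Matrix.nonsing_inv_mul M hMunit]
  set Sbr : Matrix (Fin c) (Fin c) K :=
    S.submatrix (⇑finSumFinEquiv ∘ Sum.inr) (⇑finSumFinEquiv ∘ Sum.inr) with hSbr
  -- Ψ_{e'} = Ψ_e * Sbr
  have hsub : Ψ.submatrix id e' = Ψ.submatrix id e * Sbr := by
    ext i j
    have h0 : Ψ.submatrix id e' i j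
        = zmat (a := a) (Ψ.submatrix id e') i (finSumFinEquiv (Sum.inr j)) := by
      simp [zmat]
    rw [h0, key3]
    simp only [mul_apply, hSbr, submatrix_apply, id, Function.comp]
    rw [← Equiv.sum_comp finSumFinEquiv
      (fun x => zmat (Ψ.submatrix id e) i x * S x (finSumFinEquiv (Sum.inr j)))]
    rw [Fintype.sum_sum_type]
    simp [zmat]
  -- determinant of S equals determinant of Sbr
  have hdetS : S.det = Sbr.det := by
    have hb : S.submatrix ⇑finSumFinEquiv ⇑finSumFinEquiv
        = fromBlocks 1 (S.submatrix (⇑finSumFinEquiv ∘ Sum.inl) (⇑finSumFinEquiv ∘ Sum.inr))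
            0 Sbr := by
      ext i j
      rcases i with i | i <;> rcases j with j | j
      · rw [submatrix_apply, hScol, fromBlocks_apply₁₁, Matrix.one_apply, Matrix.one_apply]
        simp [(Equiv.injective finSumFinEquiv).eq_iff]
      · rfl
      · rw [submatrix_apply, hScol, fromBlocks_apply₂₁, Matrix.one_apply]
        rw [if_neg, Matrix.zero_apply]
        intro h
        have h2 := congrArg Fin.val h
        simp [finSumFinEquiv] at h2
        omega
      · rfl
    calc S.det = (S.submatrix ⇑finSumFinEquiv ⇑finSumFinEquiv).det :=
          (det_submatrix_equiv_self finSumFinEquiv S).symm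
      _ = Sbr.det := by rw [hb, det_fromBlocks_zero₂₁, det_one, one_mul]
  have hdetS2 : S.det = M.det⁻¹ * M'.det := by
    rw [hS, det_mul, Matrix.det_nonsing_inv, Ring.inverse_eq_inv']
  -- the main identity over K
  have mainK : (Ψ.submatrix id e').det * M.det = (Ψ.submatrix id e).det * M'.det := by
    have h1 : (Ψ.submatrix id e').det = (Ψ.submatrix id e).det * Sbr.det := by
      rw [hsub, det_mul]
    rw [h1, ← hdetS, hdetS2]
    rw [mul_assoc, mul_comm (M.det⁻¹ * M'.det), ← mul_assoc M.det, mul_inv_cancel₀ hMne, one_mul]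
  rw [← hM] at hdM; rw [← hM'] at hdM'
  rw [hdM, hdM', detmapψ, detmapψ, detmapφ, detmapφ] at mainK
  have mainK2 : alg ((ψ.submatrix id e').det * (((ε : ℤ) : R) * (φ.submatrix f id).det))
      = alg ((ψ.submatrix id e).det * (((ε' : ℤ) : R) * (φ.submatrix f' id).det)) := by
    rw [_root_.map_mul, _root_.map_mul, _root_.map_mul, _root_.map_mul, map_intCast, map_intCast]
    exact mainK
  have mainR : (ψ.submatrix id e').det * (((ε : ℤ) : R) * (φ.submatrix f id).det)
      = (ψ.submatrix id e).det * (((ε' : ℤ) : R) * (φ.submatrix f' id).det) := halg mainK2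
  rcases Int.units_eq_one_or ε with h1 | h1 <;> rcases Int.units_eq_one_or ε' with h2 | h2 <;>
    subst h1 <;> subst h2 <;> simp only [Units.val_one, Units.val_neg, Int.cast_one,
      Int.cast_neg, one_mul, neg_mul, mul_neg, neg_neg, mul_one] at mainR
  · exact ⟨1, by rw [Units.val_one, one_mul]; exact mainR.symm⟩
  · exact ⟨-1, by rw [Units.val_neg, Units.val_one]; linear_combination mainR⟩
  · exact ⟨-1, by rw [Units.val_neg, Units.val_one]; linear_combination -mainR⟩
  · exact ⟨1, by rw [Units.val_one, one_mul]; linear_combination mainR⟩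
end
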